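/- Consider walks with steps ±1 (all weights equal to 1). For m ≥ 0 let W_m(q₊,q₋,u) = ∑_w q₊^{a⁺(w)} q₋^{a⁻(w)} u^{w_m} (sum over all walks w of length m) in the Laurent polynomial ring ℤ[q₊,q₋][u,u^{−1}], let B_m(q₊,q₋) = ∑_w q₊^{a⁺(w)} q₋^{a⁻(w)} (sum over bridges of length m), let G_m(q) = ∑_w q^{a(w)} (sum over excursions of length m), and let F_m(q,u) = ∑_w q^{a(w)} u^{w_m} (sum over meanders of length m). Form the corresponding power series W(z,q₊,q₋,u), B(z,q₊,q₋), G(z,q), F(z,q,u) in z with these coefficients. Then the identity (W(z,q₊,q₋,u) + B(z,q₊,q₋)) · (G(z,q₊) + G(z,q₋) − G(z,q₊)·G(z,q₋)) = G(z,q₋)·F(z,q₊,u) + G(z,q₊)·F(z,q₋,u^{−1}) holds in (ℤ[q₊,q₋][u,u^{−1}])[[z]], where F(z,q₋,u^{−1}) denotes F(z,q₋,u) with u replaced by u^{−1}. -/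

import Mathlib

open Finset MvPolynomial

/-- The step `+1` or `-1` encoded by a boolean. -/
def stp (b : Bool) : ℤ := if b then 1 else -1

/-- The altitude `w_i` of the ±1 walk of length `m` encoded by its step
sequence `ε`. -/
def ht {m : ℕ} (ε : Fin m → Bool) (i : ℕ) : ℤ :=
  ∑ j ∈ Finset.range i, if h : j < m then stp (ε ⟨j, h⟩) else 0

/-- The positive area `a⁺(w) = ∑_{i=0}^{m} max(w_i, 0)` of a ±1 walk. -/
def aplus {m : ℕ} (ε : Fin m → Bool) : ℕ :=
  ∑ i ∈ Finset.range (m + 1), (ht ε i).toNat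

/-- The negative area `a⁻(w) = ∑_{i=0}^{m} max(-w_i, 0)` of a ±1 walk. -/
def aminus {m : ℕ} (ε : Fin m → Bool) : ℕ :=
  ∑ i ∈ Finset.range (m + 1), (-(ht ε i)).toNat

/-- The area `a(w) = ∑_{i=0}^{m} w_i` of a meander (a nonnegative integer). -/
def aexc {m : ℕ} (ε : Fin m → Bool) : ℕ :=
  (∑ i ∈ Finset.range (m + 1), ht ε i).toNat

/-- The coefficient ring `ℤ[q₊,q₋]`, with `q₊ = X 0`, `q₋ = X 1`. -/
abbrev Rq : Type := MvPolynomial (Fin 2) ℤ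

/-- The Laurent polynomial ring `ℤ[q₊,q₋][u,u⁻¹]`, with `u = T 1`. -/
abbrev Lu : Type := LaurentPolynomial Rq

/-- `W_m(q₊,q₋,u) = ∑_w q₊^{a⁺(w)} q₋^{a⁻(w)} u^{w_m}`, summed over all ±1 walks of
length `m`. -/
noncomputable def Wm (m : ℕ) : Lu :=
  ∑ ε : Fin m → Bool,
    LaurentPolynomial.C (X 0 ^ aplus ε * X 1 ^ aminus ε : Rq) *
      LaurentPolynomial.T (ht ε m)

/-- `B_m(q₊,q₋) = ∑_w q₊^{a⁺(w)} q₋^{a⁻(w)}`, summed over all bridges of length `m`. -/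
noncomputable def Bm (m : ℕ) : Rq :=
  ∑ ε : Fin m → Bool,
    if ht ε m = 0 then X 0 ^ aplus ε * X 1 ^ aminus ε else 0

/-- `G_m(q) = ∑_w q^{a(w)}`, summed over all excursions of length `m`, with `q`
taken to be the variable `X k` of `ℤ[q₊,q₋]`. -/
noncomputable def Gm (k : Fin 2) (m : ℕ) : Rq :=
  ∑ ε : Fin m → Bool,
    if (∀ i ≤ m, 0 ≤ ht ε i) ∧ ht ε m = 0 then X k ^ aexc ε else 0

/-- `F_m(q,u) = ∑_w q^{a(w)} u^{w_m}`, summed over all meanders of length `m`, with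
`q` taken to be the variable `X k` of `ℤ[q₊,q₋]`. -/
noncomputable def FmM (k : Fin 2) (m : ℕ) : Lu :=
  ∑ ε : Fin m → Bool,
    if ∀ i ≤ m, 0 ≤ ht ε i then
      LaurentPolynomial.C (X k ^ aexc ε : Rq) * LaurentPolynomial.T (ht ε m)
    else 0

/-- `F_m(q,u⁻¹) = ∑_w q^{a(w)} u^{-w_m}`, i.e. `F_m(q,u)` with `u` replaced
by `u⁻¹`. -/
noncomputable def FmMinv (k : Fin 2) (m : ℕ) : Lu :=
  ∑ ε : Fin m → Bool,
    if ∀ i ≤ m, 0 ≤ ht ε i then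
      LaurentPolynomial.C (X k ^ aexc ε : Rq) * LaurentPolynomial.T (-(ht ε m))
    else 0

/-! Weight a ±1 walk by `q₊^{a⁺} q₋^{a⁻} u^{w_m}`; the weight is multiplicative under
concatenation at a zero of the walk, so cutting walks at a suitable zero factors generating
functions. Cutting at the last zero gives `W = B · Z` (`Z`: walks never returning to `0`), and
`F₊ = G₊ · T₊`, `F₋ = G₋ · T₋` (`T±`: walks staying strictly positive / negative after time `0`);
a walk that avoids `0` cannot change sign, so `Z + 1 = T₊ + T₋`. Cutting bridges and excursions at
their last zero before the end gives `B = 1 + B (P₊ + P₋)` and `G± = 1 + G± P±` (`P±`: positive /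
negative arches). Thus `B`, `G₊`, `G₋` are the inverses of `1 - P₊ - P₋`, `1 - P₊`, `1 - P₋`, whence
`B (G₊ + G₋ - G₊ G₋) = G₊ G₋`, which is the identity. The reflection `w ↦ -w` identifies
`G(z, q₋)` and `F(z, q₋, u⁻¹)` with the series `G₋` and `F₋` of nonpositive excursions and
meanders. -/

section Heights

variable {m : ℕ}

theorem ht_zero (ε : Fin m → Bool) : ht ε 0 = 0 := by
  simp [ht]

theorem ht_succ (ε : Fin m → Bool) (i : ℕ) :
    ht ε (i + 1) = ht ε i + if h : i < m then stp (ε ⟨i, h⟩) else 0 :=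
  Finset.sum_range_succ _ _

theorem abs_ht_succ_sub_le (ε : Fin m → Bool) (i : ℕ) : |ht ε (i + 1) - ht ε i| ≤ 1 := by
  rw [ht_succ, add_sub_cancel_left]
  split_ifs <;> simp [stp, apply_ite]

theorem ht_one_ne_zero (ε : Fin m → Bool) (hm : 0 < m) : ht ε 1 ≠ 0 := by
  rw [ht_succ, ht_zero, dif_pos hm]
  unfold stp
  split_ifs <;> simp

theorem nonneg_or_nonpos_of_ht_ne_zero (ε : Fin m → Bool) {r : ℕ}
    (h : ∀ i, 0 < i → i ≤ r → ht ε i ≠ 0) : (∀ i ≤ r, 0 ≤ ht ε i) ∨ ∀ i ≤ r, ht ε i ≤ 0 := by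
  induction r with
  | zero => exact Or.inl fun i hi => by rw [Nat.le_zero.1 hi, ht_zero]
  | succ r ih =>
    have hne := h (r + 1) r.succ_pos le_rfl
    have hstep := abs_le.1 (abs_ht_succ_sub_le ε r)
    have extend (p : ℤ → Prop) (hp : ∀ i ≤ r, p (ht ε i)) (hlast : p (ht ε (r + 1))) :
        ∀ i ≤ r + 1, p (ht ε i) := fun i hi => (Nat.le_succ_iff.1 hi).elim (hp i) (· ▸ hlast)
    rcases Nat.eq_zero_or_pos r with rfl | hr
    · have hz : ∀ i ≤ 0, ht ε i = 0 := fun i hi => by rw [Nat.le_zero.1 hi, ht_zero]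
      rcases le_or_gt 0 (ht ε 1) with h1 | h1
      · exact Or.inl (extend (0 ≤ ·) (fun i hi => (hz i hi).ge) h1)
      · exact Or.inr (extend (· ≤ 0) (fun i hi => (hz i hi).le) h1.le)
    · have hr0 := h r hr r.le_succ
      rcases ih fun i hi hir => h i hi (by omega) with hpos | hneg
      · exact Or.inl (extend (0 ≤ ·) hpos (by have := hpos r le_rfl; omega))
      · exact Or.inr (extend (· ≤ 0) hneg (by have := hneg r le_rfl; omega))

end Heights

section Concatenation

variable {j k : ℕ} {a : Fin j → Bool} {b : Fin k → Bool}

theorem ht_append_of_le (a : Fin j → Bool) (b : Fin k → Bool) {i : ℕ} (hi : i ≤ j) :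
    ht (Fin.append a b) i = ht a i := by
  refine Finset.sum_congr rfl fun t hmem => ?_
  have htj : t < j := by rw [Finset.mem_range] at hmem; omega
  rw [dif_pos htj, dif_pos (by omega)]
  exact congrArg stp (Fin.append_left a b ⟨t, htj⟩)

theorem ht_append_add (a : Fin j → Bool) (b : Fin k → Bool) (t : ℕ) :
    ht (Fin.append a b) (j + t) = ht a j + ht b t := by
  rw [ht, Finset.sum_range_add, ← ht, ht_append_of_le a b le_rfl]
  congr 1
  refine Finset.sum_congr rfl fun s _ => ?_
  by_cases hs : s < k
  · rw [dif_pos hs, dif_pos (by omega)]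
    exact congrArg stp (Fin.append_right a b ⟨s, hs⟩)
  · rw [dif_neg hs, dif_neg (by omega)]

theorem sum_range_ht_append (h0 : ht a j = 0) (φ : ℤ → ℕ) (hφ : φ 0 = 0) :
    ∑ i ∈ Finset.range (j + k + 1), φ (ht (Fin.append a b) i) =
      ∑ i ∈ Finset.range (j + 1), φ (ht a i) + ∑ i ∈ Finset.range (k + 1), φ (ht b i) := by
  rw [Finset.sum_range_succ' (fun i => φ (ht b i)), ht_zero, hφ, add_zero,
    show j + k + 1 = j + 1 + k by omega, Finset.sum_range_add]
  congr 1
  · exact Finset.sum_congr rfl fun i hi =>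
      congrArg φ (ht_append_of_le a b (by rw [Finset.mem_range] at hi; omega))
  · exact Finset.sum_congr rfl fun t _ => by rw [add_assoc, ht_append_add, h0, zero_add, add_comm]

theorem aplus_append (h0 : ht a j = 0) : aplus (Fin.append a b) = aplus a + aplus b :=
  sum_range_ht_append h0 Int.toNat rfl

theorem aminus_append (h0 : ht a j = 0) : aminus (Fin.append a b) = aminus a + aminus b :=
  sum_range_ht_append h0 (fun x => (-x).toNat) rfl

end Concatenation

section Reflection

variable {m : ℕ}

def reflect (ε : Fin m → Bool) : Fin m → Bool := fun i => !ε i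

theorem reflect_involutive : Function.Involutive (reflect (m := m)) :=
  fun ε => funext fun i => Bool.not_not (ε i)

theorem ht_reflect (ε : Fin m → Bool) (i : ℕ) : ht (reflect ε) i = -ht ε i := by
  rw [ht, ht, ← Finset.sum_neg_distrib]
  refine Finset.sum_congr rfl fun t _ => ?_
  split_ifs
  · simp only [reflect]
    cases ε ⟨t, ‹_›⟩ <;> rfl
  · rfl

theorem aplus_reflect (ε : Fin m → Bool) : aplus (reflect ε) = aminus ε := by
  simp only [aplus, aminus, ht_reflect]

theorem aminus_reflect (ε : Fin m → Bool) : aminus (reflect ε) = aplus ε := by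
  simp only [aplus, aminus, ht_reflect, neg_neg]

end Reflection

noncomputable def walkWeight {n : ℕ} (ε : Fin n → Bool) : Lu :=
  LaurentPolynomial.C (X 0 ^ aplus ε * X 1 ^ aminus ε : Rq) * LaurentPolynomial.T (ht ε n)

theorem walkWeight_elim0 : walkWeight (Fin.elim0 : Fin 0 → Bool) = 1 := by
  simp [walkWeight, aplus, aminus, ht_zero]

theorem walkWeight_append {j k : ℕ} {a : Fin j → Bool} (b : Fin k → Bool) (h0 : ht a j = 0) :
    walkWeight (Fin.append a b) = walkWeight a * walkWeight b := by
  rw [walkWeight, walkWeight, walkWeight, ht_append_add, h0, zero_add, aplus_append h0,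
    aminus_append h0, LaurentPolynomial.T_zero, mul_one, pow_add, pow_add]
  simp only [map_mul]
  ring

abbrev WalkPred : Type := ∀ n : ℕ, (Fin n → Bool) → Prop

def StaysIn (p : ℤ → Prop) : WalkPred := fun n ε => ∀ i ≤ n, p (ht ε i)

def IsBridge : WalkPred := fun n ε => ht ε n = 0

def AvoidsZero : WalkPred := fun n ε => ∀ i, 0 < i → i ≤ n → ht ε i ≠ 0

def IsArch : WalkPred := fun n ε => 0 < n ∧ ht ε n = 0 ∧ ∀ i, 0 < i → i < n → ht ε i ≠ 0

section Meanders

variable {m : ℕ} {ε : Fin m → Bool}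

theorem eq_zero_of_staysIn_nonneg_of_staysIn_nonpos (hpos : StaysIn (0 ≤ ·) m ε)
    (hneg : StaysIn (· ≤ 0) m ε) : m = 0 := by
  by_contra hm
  have h1 : 1 ≤ m := by omega
  exact ht_one_ne_zero ε (by omega) (le_antisymm (hneg 1 h1) (hpos 1 h1))

theorem staysIn_nonpos_reflect_iff : StaysIn (· ≤ 0) m (reflect ε) ↔ StaysIn (0 ≤ ·) m ε := by
  simp only [StaysIn, ht_reflect, neg_nonpos]

theorem isBridge_reflect_iff : IsBridge m (reflect ε) ↔ IsBridge m ε := by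
  simp only [IsBridge, ht_reflect, neg_eq_zero]

variable (h : StaysIn (0 ≤ ·) m ε)
include h

theorem aexc_eq_aplus : aexc ε = aplus ε := by
  rw [aexc, aplus, ← Int.toNat_natCast (∑ i ∈ Finset.range (m + 1), (ht ε i).toNat), Nat.cast_sum]
  congr 1
  exact Finset.sum_congr rfl fun i hi =>
    (Int.toNat_of_nonneg (h i (Nat.lt_succ_iff.1 (Finset.mem_range.1 hi)))).symm

theorem aminus_eq_zero : aminus ε = 0 :=
  Finset.sum_eq_zero fun i hi =>
    Int.toNat_eq_zero.2 (neg_nonpos.2 (h i (Nat.lt_succ_iff.1 (Finset.mem_range.1 hi))))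

theorem walkWeight_eq_of_staysIn_nonneg :
    walkWeight ε = LaurentPolynomial.C (X 0 ^ aexc ε : Rq) * LaurentPolynomial.T (ht ε m) := by
  rw [walkWeight, aminus_eq_zero h, aexc_eq_aplus h, pow_zero, mul_one]

theorem walkWeight_reflect_eq_of_staysIn_nonneg :
    walkWeight (reflect ε) =
      LaurentPolynomial.C (X 1 ^ aexc ε : Rq) * LaurentPolynomial.T (-ht ε m) := by
  rw [walkWeight, aplus_reflect, aminus_reflect, ht_reflect, aminus_eq_zero h, aexc_eq_aplus h,
    pow_zero, one_mul]

end Meanders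

section GeneratingFunctions

open scoped Classical in
noncomputable def genFun (P : WalkPred) : PowerSeries Lu :=
  PowerSeries.mk fun n => ∑ ε : Fin n → Bool with P n ε, walkWeight ε

open scoped Classical in
theorem coeff_genFun (P : WalkPred) (n : ℕ) :
    PowerSeries.coeff n (genFun P) = ∑ ε : Fin n → Bool with P n ε, walkWeight ε :=
  PowerSeries.coeff_mk _ _

open scoped Classical in
theorem coeff_genFun_eq_sum_reflect (P : WalkPred) (n : ℕ) :
    PowerSeries.coeff n (genFun P) =
      ∑ ε : Fin n → Bool with P n (reflect ε), walkWeight (reflect ε) := by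
  rw [coeff_genFun, Finset.sum_filter, Finset.sum_filter,
    ← Equiv.sum_comp (reflect_involutive.toPerm _)]
  rfl

theorem coeff_zero_genFun {P : WalkPred} (h : P 0 Fin.elim0) :
    PowerSeries.coeff 0 (genFun P) = 1 := by
  classical
  rw [coeff_genFun, Finset.sum_filter, Fintype.sum_unique, ← walkWeight_elim0]
  exact if_pos (by convert h)

theorem genFun_eq_one_add {P : WalkPred} (h : P 0 Fin.elim0) :
    genFun P = 1 + genFun (P ⊓ fun n _ => 0 < n) := by
  classical
  ext (_ | n) : 1
  · rw [map_add, coeff_zero_genFun h, PowerSeries.coeff_one, if_pos rfl, coeff_genFun]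
    simp
  · rw [map_add, PowerSeries.coeff_one, if_neg n.succ_ne_zero, zero_add, coeff_genFun,
      coeff_genFun]
    congr 1
    ext
    simp

theorem genFun_length_eq_zero : genFun (fun n _ => n = 0) = 1 := by
  ext (_ | n) : 1
  · rw [coeff_zero_genFun rfl, PowerSeries.coeff_one, if_pos rfl]
  · simp [coeff_genFun]

theorem genFun_bot : genFun ⊥ = 0 := by
  ext n : 1
  simp [coeff_genFun]

theorem genFun_sup_add_genFun_inf (P Q : WalkPred) :
    genFun (P ⊔ Q) + genFun (P ⊓ Q) = genFun P + genFun Q := by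
  classical
  ext n : 1
  simp only [map_add, coeff_genFun]
  symm
  rw [← Finset.sum_union_inter, ← Finset.filter_or, ← Finset.filter_and]
  convert rfl using 3 <;> exact Finset.filter_congr fun _ _ => Iff.rfl

theorem sum_sum_append {M : Type*} [AddCommMonoid M] {j k : ℕ} (f : (Fin (j + k) → Bool) → M) :
    ∑ a : Fin j → Bool, ∑ b : Fin k → Bool, f (Fin.append a b) = ∑ ε, f ε := by
  rw [← (Fin.appendEquiv j k).sum_comp, Fintype.sum_prod_type]
  rfl

/-- `σ` chooses where to cut a walk; `hsplit` says that appending is a bijection from pairs of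
walks in `Q` and `R` onto the walks in `P` whose cut lies at the junction. -/
theorem genFun_eq_mul_of_append (P Q R : WalkPred) (σ : ∀ n, (Fin n → Bool) → ℕ)
    (hσ : ∀ n ε, σ n ε ≤ n) (hQ : ∀ j (a : Fin j → Bool), Q j a → ht a j = 0)
    (hsplit : ∀ j k (a : Fin j → Bool) (b : Fin k → Bool),
      Q j a ∧ R k b ↔ P (j + k) (Fin.append a b) ∧ σ (j + k) (Fin.append a b) = j) :
    genFun P = genFun Q * genFun R := by
  classical
  ext n : 1
  rw [PowerSeries.coeff_mul, Finset.Nat.sum_antidiagonal_eq_sum_range_succ_mk, coeff_genFun,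
    ← Finset.sum_fiberwise_of_maps_to (g := σ n) (t := Finset.range (n + 1))
      (fun ε _ => Finset.mem_range_succ_iff.2 (hσ n ε)) walkWeight]
  refine Finset.sum_congr rfl fun j hj => ?_
  obtain ⟨k, rfl⟩ := Nat.exists_eq_add_of_le (Finset.mem_range_succ_iff.1 hj)
  rw [Nat.add_sub_cancel_left, coeff_genFun, coeff_genFun, Finset.filter_filter]
  simp only [Finset.sum_filter]
  rw [Finset.sum_mul_sum, ← sum_sum_append]
  refine Fintype.sum_congr _ _ fun a => Fintype.sum_congr _ _ fun b => ?_
  rw [ite_zero_mul_ite_zero]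
  exact if_ctx_congr (hsplit j k a b).symm (fun h => walkWeight_append b (hQ j a h.1)) fun _ => rfl

end GeneratingFunctions

section LastZero

def lastZeroUpTo {m : ℕ} (ε : Fin m → Bool) (r : ℕ) : ℕ := Nat.findGreatest (ht ε · = 0) r

theorem lastZeroUpTo_le {m : ℕ} (ε : Fin m → Bool) (r : ℕ) : lastZeroUpTo ε r ≤ r :=
  Nat.findGreatest_le r

variable {j k : ℕ} {a : Fin j → Bool} {b : Fin k → Bool}

theorem lastZeroUpTo_append_eq_iff {r : ℕ} :
    lastZeroUpTo (Fin.append a b) r = j ↔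
      j ≤ r ∧ ht a j = 0 ∧ ∀ t, 0 < t → j + t ≤ r → ht b t ≠ 0 := by
  have hzero : (j ≠ 0 → ht a j = 0) ↔ ht a j = 0 := by
    rcases Nat.eq_zero_or_pos j with rfl | hj
    · simp [ht_zero]
    · exact ⟨fun h => h hj.ne', fun h _ => h⟩
  rw [lastZeroUpTo, Nat.findGreatest_eq_iff, ht_append_of_le a b le_rfl, hzero]
  refine and_congr_right fun _ => and_congr_right fun h0 =>
    ⟨fun h t htpos htr => ?_, fun h i hi hir => ?_⟩
  · simpa only [ht_append_add, h0, zero_add] using h (show j < j + t by omega) htr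
  · obtain ⟨t, rfl⟩ := Nat.exists_eq_add_of_lt hi
    simpa only [add_assoc, ht_append_add, h0, zero_add] using h (t + 1) (by omega) (by omega)

theorem staysIn_append_iff (p : ℤ → Prop) (h0 : ht a j = 0) :
    StaysIn p (j + k) (Fin.append a b) ↔ StaysIn p j a ∧ StaysIn p k b := by
  refine ⟨fun h => ⟨fun i hi => ?_, fun t htk => ?_⟩, fun ⟨ha, hb⟩ i hi => ?_⟩
  · simpa only [ht_append_of_le a b hi] using h i (by omega)
  · simpa only [ht_append_add, h0, zero_add] using h (j + t) (by omega)
  · rcases le_or_gt i j with hij | hji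
    · simpa only [ht_append_of_le a b hij] using ha i hij
    · obtain ⟨t, rfl⟩ := Nat.exists_eq_add_of_lt hji
      simpa only [add_assoc, ht_append_add, h0, zero_add] using hb (t + 1) (by omega)

end LastZero

theorem genFun_staysIn (p : ℤ → Prop) :
    genFun (StaysIn p) = genFun (StaysIn p ⊓ IsBridge) * genFun (StaysIn p ⊓ AvoidsZero) := by
  refine genFun_eq_mul_of_append _ _ _ (fun n ε => lastZeroUpTo ε n)
    (fun n ε => lastZeroUpTo_le ε n) (fun j a h => h.2) fun j k a b => ?_
  rw [lastZeroUpTo_append_eq_iff]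
  constructor
  · rintro ⟨⟨hpa, h0⟩, hpb, hb⟩
    exact ⟨(staysIn_append_iff p h0).2 ⟨hpa, hpb⟩, by omega, h0,
      fun t htpos htk => hb t htpos (by omega)⟩
  · rintro ⟨hp, -, h0, hb⟩
    obtain ⟨hpa, hpb⟩ := (staysIn_append_iff p h0).1 hp
    exact ⟨⟨hpa, h0⟩, hpb, fun t htpos htk => hb t htpos (by omega)⟩

theorem genFun_staysIn_isBridge_pos (p : ℤ → Prop) :
    genFun (StaysIn p ⊓ IsBridge ⊓ fun n _ => 0 < n) =
      genFun (StaysIn p ⊓ IsBridge) * genFun (StaysIn p ⊓ IsArch) := by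
  refine genFun_eq_mul_of_append _ _ _ (fun n ε => lastZeroUpTo ε (n - 1))
    (fun n ε => (lastZeroUpTo_le ε _).trans (Nat.sub_le n 1)) (fun j a h => h.2) fun j k a b => ?_
  rw [lastZeroUpTo_append_eq_iff]
  constructor
  · rintro ⟨⟨hpa, h0⟩, hpb, hk, hbk, hb⟩
    refine ⟨⟨⟨(staysIn_append_iff p h0).2 ⟨hpa, hpb⟩, ?_⟩, by omega⟩, by omega, h0,
      fun t htpos htk => hb t htpos (by omega)⟩
    rw [IsBridge, ht_append_add, h0, hbk, zero_add]
  · rintro ⟨⟨⟨hp, hbr⟩, hpos⟩, hjk, h0, hb⟩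
    obtain ⟨hpa, hpb⟩ := (staysIn_append_iff p h0).1 hp
    have hbk : ht b k = 0 := by rwa [IsBridge, ht_append_add, h0, zero_add] at hbr
    exact ⟨⟨hpa, h0⟩, hpb, by omega, hbk, fun t htpos htk => hb t htpos (by omega)⟩

theorem genFun_staysIn_isBridge {p : ℤ → Prop} (hp : p 0) :
    genFun (StaysIn p ⊓ IsBridge) =
      1 + genFun (StaysIn p ⊓ IsBridge) * genFun (StaysIn p ⊓ IsArch) := by
  rw [← genFun_staysIn_isBridge_pos, ← genFun_eq_one_add]
  exact ⟨fun i hi => by rwa [Nat.le_zero.1 hi, ht_zero], ht_zero _⟩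

theorem staysIn_true_eq_top : StaysIn (fun _ => True) = ⊤ := by
  funext n ε
  exact propext ⟨fun _ => trivial, fun _ _ _ => trivial⟩

theorem genFun_top : genFun ⊤ = genFun IsBridge * genFun AvoidsZero := by
  simpa only [staysIn_true_eq_top, top_inf_eq] using genFun_staysIn fun _ => True

theorem genFun_isBridge : genFun IsBridge = 1 + genFun IsBridge * genFun IsArch := by
  simpa only [staysIn_true_eq_top, top_inf_eq] using
    genFun_staysIn_isBridge (p := fun _ => True) trivial

theorem genFun_avoidsZero_add_one :
    genFun AvoidsZero + 1 =
      genFun (StaysIn (0 ≤ ·) ⊓ AvoidsZero) + genFun (StaysIn (· ≤ 0) ⊓ AvoidsZero) := by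
  rw [← genFun_sup_add_genFun_inf, ← genFun_length_eq_zero]
  congr
  · funext n ε
    refine propext ⟨fun h => ?_, fun h => h.elim And.right And.right⟩
    exact (nonneg_or_nonpos_of_ht_ne_zero ε h).imp (⟨·, h⟩) (⟨·, h⟩)
  · funext n ε
    refine propext ⟨fun h => ?_, fun ⟨⟨hpos, _⟩, hneg, _⟩ =>
      eq_zero_of_staysIn_nonneg_of_staysIn_nonpos hpos hneg⟩
    subst h
    have hzero : ∀ i ≤ 0, ht ε i = 0 := fun i hi => by rw [Nat.le_zero.1 hi, ht_zero]
    have havoid : AvoidsZero 0 ε := fun i hi hi0 => absurd hi (by omega)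
    exact ⟨⟨fun i hi => (hzero i hi).ge, havoid⟩, fun i hi => (hzero i hi).le, havoid⟩

theorem genFun_isArch :
    genFun IsArch = genFun (StaysIn (0 ≤ ·) ⊓ IsArch) + genFun (StaysIn (· ≤ 0) ⊓ IsArch) := by
  rw [← genFun_sup_add_genFun_inf, ← add_zero (genFun IsArch), ← genFun_bot]
  congr
  · funext n ε
    refine propext ⟨fun h => ?_, fun h => h.elim And.right And.right⟩
    obtain ⟨hn, h0, hne⟩ := h
    have extend : ∀ p : ℤ → Prop, p 0 → (∀ i ≤ n - 1, p (ht ε i)) → StaysIn p n ε :=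
      fun p hp0 hp i hi => if hin : i = n then by rwa [hin, h0] else hp i (by omega)
    exact (nonneg_or_nonpos_of_ht_ne_zero ε (r := n - 1) fun i hi hin => hne i hi (by omega)).imp
      (⟨extend _ le_rfl ·, hn, h0, hne⟩) (⟨extend _ le_rfl ·, hn, h0, hne⟩)
  · funext n ε
    exact propext ⟨False.elim, fun ⟨⟨hpos, hn, _⟩, hneg, _⟩ =>
      hn.ne' (eq_zero_of_staysIn_nonneg_of_staysIn_nonpos hpos hneg)⟩

theorem mk_Wm : PowerSeries.mk Wm = genFun ⊤ := by
  classical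
  ext n : 1
  rw [PowerSeries.coeff_mk, coeff_genFun,
    Finset.filter_true_of_mem (p := (⊤ : WalkPred) n) fun _ _ => trivial]
  rfl

theorem mk_C_Bm :
    PowerSeries.mk (fun m => (LaurentPolynomial.C (Bm m) : Lu)) = genFun IsBridge := by
  classical
  ext n : 1
  rw [PowerSeries.coeff_mk, coeff_genFun, Bm, map_sum, Finset.sum_filter]
  refine Fintype.sum_congr _ _ fun ε => ?_
  rw [apply_ite LaurentPolynomial.C, map_zero]
  exact if_ctx_congr Iff.rfl (fun h => by rw [walkWeight, h, LaurentPolynomial.T_zero, mul_one])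
    fun _ => rfl

theorem mk_C_Gm_zero :
    PowerSeries.mk (fun m => (LaurentPolynomial.C (Gm 0 m) : Lu)) =
      genFun (StaysIn (0 ≤ ·) ⊓ IsBridge) := by
  classical
  ext n : 1
  rw [PowerSeries.coeff_mk, coeff_genFun, Gm, map_sum, Finset.sum_filter]
  refine Fintype.sum_congr _ _ fun ε => ?_
  rw [apply_ite LaurentPolynomial.C, map_zero]
  exact if_ctx_congr Iff.rfl (fun h => by
    rw [walkWeight_eq_of_staysIn_nonneg h.1, h.2, LaurentPolynomial.T_zero, mul_one]) fun _ => rfl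

theorem mk_C_Gm_one :
    PowerSeries.mk (fun m => (LaurentPolynomial.C (Gm 1 m) : Lu)) =
      genFun (StaysIn (· ≤ 0) ⊓ IsBridge) := by
  classical
  ext n : 1
  rw [PowerSeries.coeff_mk, coeff_genFun_eq_sum_reflect, Gm, map_sum, Finset.sum_filter]
  refine Fintype.sum_congr _ _ fun ε => ?_
  rw [apply_ite LaurentPolynomial.C, map_zero]
  have hiff : (StaysIn (0 ≤ ·) ⊓ IsBridge) n ε ↔ (StaysIn (· ≤ 0) ⊓ IsBridge) n (reflect ε) :=
    and_congr staysIn_nonpos_reflect_iff.symm isBridge_reflect_iff.symm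
  refine if_ctx_congr hiff (fun h => ?_) fun _ => rfl
  obtain ⟨hpos, hbr⟩ := hiff.2 h
  rw [walkWeight_reflect_eq_of_staysIn_nonneg hpos, hbr, neg_zero, LaurentPolynomial.T_zero,
    mul_one]

theorem mk_FmM_zero : PowerSeries.mk (FmM 0) = genFun (StaysIn (0 ≤ ·)) := by
  classical
  ext n : 1
  rw [PowerSeries.coeff_mk, coeff_genFun, FmM, Finset.sum_filter]
  exact Fintype.sum_congr _ _ fun ε =>
    if_ctx_congr Iff.rfl (fun h => (walkWeight_eq_of_staysIn_nonneg h).symm) fun _ => rfl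

theorem mk_FmMinv_one : PowerSeries.mk (FmMinv 1) = genFun (StaysIn (· ≤ 0)) := by
  classical
  ext n : 1
  rw [PowerSeries.coeff_mk, coeff_genFun_eq_sum_reflect, FmMinv, Finset.sum_filter]
  exact Fintype.sum_congr _ _ fun ε =>
    if_ctx_congr staysIn_nonpos_reflect_iff.symm
      (fun h => (walkWeight_reflect_eq_of_staysIn_nonneg (staysIn_nonpos_reflect_iff.1 h)).symm)
      fun _ => rfl

theorem add_mul_sub_eq_of_factorizations {R : Type*} [CommRing R]
    {W B Z Tp Tn Fp Fn Gp Gn Pp Pn : R} (hW : W = B * Z) (hZ : Z + 1 = Tp + Tn)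
    (hFp : Fp = Gp * Tp) (hFn : Fn = Gn * Tn) (hB : B = 1 + B * (Pp + Pn))
    (hGp : Gp = 1 + Gp * Pp) (hGn : Gn = 1 + Gn * Pn) :
    (W + B) * (Gp + Gn - Gp * Gn) = Gn * Fp + Gp * Fn := by
  linear_combination (Gp + Gn - Gp * Gn) * hW + (Gp + Gn - Gp * Gn) * B * hZ - Gn * hFp
    - Gp * hFn + (Tp + Tn) * Gp * Gn * hB - (Tp + Tn) * B * Gn * hGp - (Tp + Tn) * B * Gp * hGn

/-- the walk decomposition identity
`(W(z,q₊,q₋,u) + B(z,q₊,q₋))·(G(z,q₊) + G(z,q₋) − G(z,q₊)·G(z,q₋))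
  = G(z,q₋)·F(z,q₊,u) + G(z,q₊)·F(z,q₋,u⁻¹)`
in `(ℤ[q₊,q₋][u,u⁻¹])[[z]]`. -/
theorem walk_decomposition :
    (PowerSeries.mk Wm +
        PowerSeries.mk (fun m => (LaurentPolynomial.C (Bm m) : Lu))) *
      (PowerSeries.mk (fun m => (LaurentPolynomial.C (Gm 0 m) : Lu)) +
        PowerSeries.mk (fun m => (LaurentPolynomial.C (Gm 1 m) : Lu)) -
        PowerSeries.mk (fun m => (LaurentPolynomial.C (Gm 0 m) : Lu)) *
          PowerSeries.mk (fun m => (LaurentPolynomial.C (Gm 1 m) : Lu))) =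
    PowerSeries.mk (fun m => (LaurentPolynomial.C (Gm 1 m) : Lu)) *
        PowerSeries.mk (FmM 0) +
      PowerSeries.mk (fun m => (LaurentPolynomial.C (Gm 0 m) : Lu)) *
        PowerSeries.mk (FmMinv 1) := by
  rw [mk_Wm, mk_C_Bm, mk_C_Gm_zero, mk_C_Gm_one, mk_FmM_zero, mk_FmMinv_one]
  exact add_mul_sub_eq_of_factorizations genFun_top genFun_avoidsZero_add_one
    (genFun_staysIn _) (genFun_staysIn _) (genFun_isArch ▸ genFun_isBridge)
    (genFun_staysIn_isBridge le_rfl) (genFun_staysIn_isBridge le_rfl)
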